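/- Assume every entry of A lies in [−1, 1], let μ > 0, and set P = m + n. Then for all profiles σ, σ′ ∈ Δ_m × Δ_n, ‖m(σ) − m(σ′)‖₂ ≤ (2P² + 3μP + P + μ)·‖σ − σ′‖₂. -/
import Mathlib


open Finset

/-- Squared Euclidean norm of a vector in `ℝ^d`. -/
noncomputable def sqnorm {d : ℕ} (v : Fin d → ℝ) : ℝ := ∑ i, (v i) ^ 2

/-- Euclidean norm `‖·‖₂` of a vector in `ℝ^d`. -/
noncomputable def enorm2 {d : ℕ} (v : Fin d → ℝ) : ℝ := Real.sqrt (sqnorm v)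

/-- Euclidean inner product on `ℝ^d`. -/
noncomputable def ip {d : ℕ} (u v : Fin d → ℝ) : ℝ := ∑ i, u i * v i

/-- The max-player's payoff `⟨x, A y⟩` in the two-player zero-sum game with payoff matrix `A`. -/
noncomputable def pay {m n : ℕ} (A : Matrix (Fin m) (Fin n) ℝ)
    (x : Fin m → ℝ) (y : Fin n → ℝ) : ℝ := ip x (A.mulVec y)

/-- Regularized loss gradient of the min-player at profile `σ = (x, y)`:
`ℓ₀(σ) = A y + μ(x − r₀)`. -/
noncomputable def ell0 {m n : ℕ} (A : Matrix (Fin m) (Fin n) ℝ) (μ : ℝ)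
    (r₀ : Fin m → ℝ) (σ : (Fin m → ℝ) × (Fin n → ℝ)) : Fin m → ℝ :=
  A.mulVec σ.2 + μ • (σ.1 - r₀)

/-- Regularized loss gradient of the max-player at profile `σ = (x, y)`:
`ℓ₁(σ) = −Aᵀ x + μ(y − r₁)`. -/
noncomputable def ell1 {m n : ℕ} (A : Matrix (Fin m) (Fin n) ℝ) (μ : ℝ)
    (r₁ : Fin n → ℝ) (σ : (Fin m → ℝ) × (Fin n → ℝ)) : Fin n → ℝ :=
  -(A.transpose.mulVec σ.1) + μ • (σ.2 - r₁)

/-- `m₀(σ) = ⟨ℓ₀(σ), x⟩·𝟙 − ℓ₀(σ)`. -/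
noncomputable def mvec0 {m n : ℕ} (A : Matrix (Fin m) (Fin n) ℝ) (μ : ℝ)
    (r₀ : Fin m → ℝ) (σ : (Fin m → ℝ) × (Fin n → ℝ)) : Fin m → ℝ :=
  (ip (ell0 A μ r₀ σ) σ.1) • (1 : Fin m → ℝ) - ell0 A μ r₀ σ

/-- `m₁(σ) = ⟨ℓ₁(σ), y⟩·𝟙 − ℓ₁(σ)`. -/
noncomputable def mvec1 {m n : ℕ} (A : Matrix (Fin m) (Fin n) ℝ) (μ : ℝ)
    (r₁ : Fin n → ℝ) (σ : (Fin m → ℝ) × (Fin n → ℝ)) : Fin n → ℝ :=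
  (ip (ell1 A μ r₁ σ) σ.2) • (1 : Fin n → ℝ) - ell1 A μ r₁ σ

/-- The strategy profile obtained by `ℓ₁`-normalizing each block of
the regret vector `θ`: `σ_i = θ_i / ‖θ_i‖₁`. -/
noncomputable def strat {m n : ℕ} (θ : (Fin m → ℝ) × (Fin n → ℝ)) :
    (Fin m → ℝ) × (Fin n → ℝ) :=
  ((∑ i, |θ.1 i|)⁻¹ • θ.1, (∑ j, |θ.2 j|)⁻¹ • θ.2)


lemma sqnorm_nonneg {d : ℕ} (v : Fin d → ℝ) : 0 ≤ sqnorm v :=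
  Finset.sum_nonneg fun _ _ => sq_nonneg _

lemma abs_le_sqrt_sqnorm {d : ℕ} (v : Fin d → ℝ) (i : Fin d) :
    |v i| ≤ Real.sqrt (sqnorm v) := by
  rw [← Real.sqrt_sq_eq_abs]
  exact Real.sqrt_le_sqrt (Finset.single_le_sum (fun j _ => sq_nonneg (v j)) (mem_univ i))

lemma sum_abs_le {d : ℕ} (v : Fin d → ℝ) :
    ∑ i, |v i| ≤ Real.sqrt d * Real.sqrt (sqnorm v) := by
  rw [← Real.sqrt_mul (by positivity), ← Real.sqrt_sq (Finset.sum_nonneg fun i _ => abs_nonneg (v i))]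
  apply Real.sqrt_le_sqrt
  calc (∑ i, |v i|) ^ 2 ≤ (d : ℝ) * ∑ i, |v i| ^ 2 := by
        simpa using sq_sum_le_card_mul_sum_sq (s := univ) (f := fun i => |v i|)
    _ = d * sqnorm v := by simp [sqnorm, sq_abs]

lemma ip_abs_le {d : ℕ} (u v : Fin d → ℝ) :
    |ip u v| ≤ Real.sqrt (sqnorm u) * Real.sqrt (sqnorm v) := by
  rw [← Real.sqrt_mul (sqnorm_nonneg u), ← Real.sqrt_sq_eq_abs]
  exact Real.sqrt_le_sqrt (Finset.sum_mul_sq_le_sq_mul_sq univ u v)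

lemma sqnorm_le_of_forall {d : ℕ} (v : Fin d → ℝ) (c : ℝ) (h : ∀ i, |v i| ≤ c) :
    sqnorm v ≤ d * c ^ 2 := by
  have h2 : ∀ i, (v i) ^ 2 ≤ c ^ 2 := fun i => by
    have := h i; nlinarith [abs_nonneg (v i), sq_abs (v i)]
  calc sqnorm v ≤ ∑ _i : Fin d, c ^ 2 := Finset.sum_le_sum fun i _ => h2 i
    _ = d * c ^ 2 := by simp [mul_comm]

lemma key {a b : ℕ} (B : Matrix (Fin a) (Fin b) ℝ) (hB : ∀ i j, |B i j| ≤ 1)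
    (μ : ℝ) (hμ : 0 ≤ μ) (r : Fin a → ℝ) (hr : r ∈ stdSimplex ℝ (Fin a))
    (x x' : Fin a → ℝ) (y y' : Fin b → ℝ)
    (hx : x ∈ stdSimplex ℝ (Fin a)) (hx' : x' ∈ stdSimplex ℝ (Fin a))
    (hy : y ∈ stdSimplex ℝ (Fin b)) (hy' : y' ∈ stdSimplex ℝ (Fin b))
    (D : ℝ) (hDx : Real.sqrt (sqnorm (x - x')) ≤ D) (hDy : Real.sqrt (sqnorm (y - y')) ≤ D) :
    sqnorm (((ip (B.mulVec y + μ • (x - r)) x) • (1 : Fin a → ℝ) - (B.mulVec y + μ • (x - r)))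
          - ((ip (B.mulVec y' + μ • (x' - r)) x') • (1 : Fin a → ℝ) - (B.mulVec y' + μ • (x' - r))))
      ≤ a * ((2 * Real.sqrt b + 2 * μ + Real.sqrt a * (1 + μ)) * D) ^ 2 := by
  have hD0 : 0 ≤ D := le_trans (Real.sqrt_nonneg _) hDx
  set ℓ : Fin a → ℝ := B.mulVec y + μ • (x - r) with hℓ
  set ℓ' : Fin a → ℝ := B.mulVec y' + μ • (x' - r) with hℓ'
  have hDx' : Real.sqrt (sqnorm (x - x')) ≤ D := hDx
  -- pointwise difference bound
  have hdiff : ∀ i, |ℓ i - ℓ' i| ≤ (Real.sqrt b + μ) * D := by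
    intro i
    have h1 : ℓ i - ℓ' i = (∑ j, B i j * (y j - y' j)) + μ * (x i - x' i) := by
      simp [hℓ, hℓ', Matrix.mulVec, dotProduct, mul_sub, Finset.sum_sub_distrib]
      ring
    have h2 : |∑ j, B i j * (y j - y' j)| ≤ ∑ j, |y j - y' j| := by
      refine le_trans (Finset.abs_sum_le_sum_abs _ _) (Finset.sum_le_sum fun j _ => ?_)
      rw [abs_mul]
      exact mul_le_of_le_one_left (abs_nonneg _) (hB i j)
    have h3 : ∑ j, |y j - y' j| ≤ Real.sqrt b * D := by
      refine le_trans ?_ (mul_le_mul_of_nonneg_left hDy (Real.sqrt_nonneg _))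
      simpa using sum_abs_le (y - y')
    have h4 : |x i - x' i| ≤ D := by
      refine le_trans ?_ hDx'
      simpa using abs_le_sqrt_sqnorm (x - x') i
    calc |ℓ i - ℓ' i| ≤ |∑ j, B i j * (y j - y' j)| + |μ * (x i - x' i)| := by
            rw [h1]; exact abs_add_le _ _
      _ ≤ Real.sqrt b * D + μ * D := by
            rw [abs_mul, abs_of_nonneg hμ]
            exact add_le_add (le_trans h2 h3) (mul_le_mul_of_nonneg_left h4 hμ)
      _ = (Real.sqrt b + μ) * D := by ring
  -- sup bound on ℓ'
  have hinf : ∀ i, |ℓ' i| ≤ 1 + μ := by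
    intro i
    have h1 : ℓ' i = (∑ j, B i j * y' j) + μ * (x' i - r i) := by
      simp [hℓ', Matrix.mulVec, dotProduct]
    have h2 : |∑ j, B i j * y' j| ≤ 1 := by
      calc |∑ j, B i j * y' j| ≤ ∑ j, |B i j * y' j| := Finset.abs_sum_le_sum_abs _ _
        _ ≤ ∑ j, y' j := Finset.sum_le_sum fun j _ => by
            rw [abs_mul, abs_of_nonneg (hy'.1 j)]
            exact mul_le_of_le_one_left (hy'.1 j) (hB i j)
        _ = 1 := hy'.2
    have hx1 : x' i ≤ 1 := by
      rw [← hx'.2]; exact Finset.single_le_sum (fun j _ => hx'.1 j) (mem_univ i)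
    have hr1 : r i ≤ 1 := by
      rw [← hr.2]; exact Finset.single_le_sum (fun j _ => hr.1 j) (mem_univ i)
    have h3 : |x' i - r i| ≤ 1 := by
      rw [abs_le]; constructor <;> [linarith [hx'.1 i, hr.1 i]; linarith [hx'.1 i, hr.1 i]]
    calc |ℓ' i| ≤ |∑ j, B i j * y' j| + |μ * (x' i - r i)| := by rw [h1]; exact abs_add_le _ _
      _ ≤ 1 + μ * 1 := by
          rw [abs_mul, abs_of_nonneg hμ]
          exact add_le_add h2 (mul_le_mul_of_nonneg_left h3 hμ)
      _ = 1 + μ := by ring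
  -- inner product difference bound
  have hS : |ip ℓ x - ip ℓ' x'| ≤ (Real.sqrt b + μ) * D + Real.sqrt a * (1 + μ) * D := by
    have hsplit : ip ℓ x - ip ℓ' x' = (∑ i, (ℓ i - ℓ' i) * x i) + ip ℓ' (x - x') := by
      simp only [ip, Pi.sub_apply, ← Finset.sum_add_distrib, ← Finset.sum_sub_distrib]
      exact Finset.sum_congr rfl fun i _ => by ring
    have h1 : |∑ i, (ℓ i - ℓ' i) * x i| ≤ (Real.sqrt b + μ) * D := by
      calc |∑ i, (ℓ i - ℓ' i) * x i| ≤ ∑ i, |(ℓ i - ℓ' i)| * x i := by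
            refine le_trans (Finset.abs_sum_le_sum_abs _ _) (le_of_eq ?_)
            exact Finset.sum_congr rfl fun i _ => by rw [abs_mul, abs_of_nonneg (hx.1 i)]
        _ ≤ ∑ i, ((Real.sqrt b + μ) * D) * x i :=
            Finset.sum_le_sum fun i _ => mul_le_mul_of_nonneg_right (hdiff i) (hx.1 i)
        _ = (Real.sqrt b + μ) * D := by rw [← Finset.mul_sum, hx.2, mul_one]
    have h2 : |ip ℓ' (x - x')| ≤ Real.sqrt a * (1 + μ) * D := by
      have hn : sqnorm ℓ' ≤ a * (1 + μ) ^ 2 := sqnorm_le_of_forall ℓ' (1 + μ) hinf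
      have h2a : Real.sqrt (sqnorm ℓ') ≤ Real.sqrt a * (1 + μ) := by
        rw [← Real.sqrt_sq (by linarith : (0:ℝ) ≤ 1 + μ), ← Real.sqrt_mul (by positivity)]
        exact Real.sqrt_le_sqrt hn
      calc |ip ℓ' (x - x')| ≤ Real.sqrt (sqnorm ℓ') * Real.sqrt (sqnorm (x - x')) :=
            ip_abs_le _ _
        _ ≤ (Real.sqrt a * (1 + μ)) * D :=
            mul_le_mul h2a hDx' (Real.sqrt_nonneg _) (by positivity)
    calc |ip ℓ x - ip ℓ' x'| ≤ |∑ i, (ℓ i - ℓ' i) * x i| + |ip ℓ' (x - x')| := by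
          rw [hsplit]; exact abs_add_le _ _
      _ ≤ (Real.sqrt b + μ) * D + Real.sqrt a * (1 + μ) * D := add_le_add h1 h2
  -- pointwise bound on the final vector
  have hfin : ∀ i, |(((ip ℓ x) • (1 : Fin a → ℝ) - ℓ) - ((ip ℓ' x') • (1 : Fin a → ℝ) - ℓ')) i|
      ≤ (2 * Real.sqrt b + 2 * μ + Real.sqrt a * (1 + μ)) * D := by
    intro i
    have h1 : (((ip ℓ x) • (1 : Fin a → ℝ) - ℓ) - ((ip ℓ' x') • (1 : Fin a → ℝ) - ℓ')) i
        = (ip ℓ x - ip ℓ' x') - (ℓ i - ℓ' i) := by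
      simp [Pi.sub_apply, Pi.smul_apply]; ring
    calc |(((ip ℓ x) • (1 : Fin a → ℝ) - ℓ) - ((ip ℓ' x') • (1 : Fin a → ℝ) - ℓ')) i|
        ≤ |ip ℓ x - ip ℓ' x'| + |ℓ i - ℓ' i| := by rw [h1]; exact abs_sub _ _
      _ ≤ ((Real.sqrt b + μ) * D + Real.sqrt a * (1 + μ) * D) + (Real.sqrt b + μ) * D :=
          add_le_add hS (hdiff i)
      _ = (2 * Real.sqrt b + 2 * μ + Real.sqrt a * (1 + μ)) * D := by ring
  exact sqnorm_le_of_forall _ _ hfin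

set_option maxHeartbeats 1000000 in
/-- Lemma on smoothness of `m`: if all entries of `A` lie in `[−1, 1]` and
`P = m + n`, then `‖m(σ) − m(σ′)‖₂ ≤ (2P² + 3μP + P + μ)‖σ − σ′‖₂` for all profiles
`σ, σ′ ∈ Δ_m × Δ_n`. -/
theorem mvec_lipschitz
    (m n : ℕ) (hm : 1 ≤ m) (hn : 1 ≤ n) (A : Matrix (Fin m) (Fin n) ℝ)
    (hA : ∀ i j, A i j ∈ Set.Icc (-1 : ℝ) 1)
    (μ : ℝ) (hμ : 0 < μ)
    (r₀ : Fin m → ℝ) (r₁ : Fin n → ℝ)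
    (hr₀ : r₀ ∈ stdSimplex ℝ (Fin m)) (hr₁ : r₁ ∈ stdSimplex ℝ (Fin n))
    (P : ℝ) (hP : P = ((m : ℝ) + (n : ℝ)))
    (σ σ' : (Fin m → ℝ) × (Fin n → ℝ))
    (hσ : σ ∈ stdSimplex ℝ (Fin m) ×ˢ stdSimplex ℝ (Fin n))
    (hσ' : σ' ∈ stdSimplex ℝ (Fin m) ×ˢ stdSimplex ℝ (Fin n)) :
    Real.sqrt (sqnorm (mvec0 A μ r₀ σ - mvec0 A μ r₀ σ') +
               sqnorm (mvec1 A μ r₁ σ - mvec1 A μ r₁ σ')) ≤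
    (2 * P ^ 2 + 3 * μ * P + P + μ) *
      Real.sqrt (sqnorm (σ.1 - σ'.1) + sqnorm (σ.2 - σ'.2)) := by
  obtain ⟨hσ1, hσ2⟩ := hσ
  obtain ⟨hσ'1, hσ'2⟩ := hσ'
  set D := Real.sqrt (sqnorm (σ.1 - σ'.1) + sqnorm (σ.2 - σ'.2)) with hD
  have hD0 : 0 ≤ D := Real.sqrt_nonneg _
  have hDx : Real.sqrt (sqnorm (σ.1 - σ'.1)) ≤ D :=
    Real.sqrt_le_sqrt (le_add_of_nonneg_right (sqnorm_nonneg _))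
  have hDy : Real.sqrt (sqnorm (σ.2 - σ'.2)) ≤ D :=
    Real.sqrt_le_sqrt (le_add_of_nonneg_left (sqnorm_nonneg _))
  set sm := Real.sqrt m with hsmdef
  set sn := Real.sqrt n with hsndef
  set c0 : ℝ := 2 * sn + 2 * μ + sm * (1 + μ) with hc0def
  set c1 : ℝ := 2 * sm + 2 * μ + sn * (1 + μ) with hc1def
  have hAabs : ∀ i j, |A i j| ≤ 1 := fun i j => abs_le.mpr ⟨(hA i j).1, (hA i j).2⟩
  have h0 : sqnorm (mvec0 A μ r₀ σ - mvec0 A μ r₀ σ') ≤ m * (c0 * D) ^ 2 := by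
    have h := key A hAabs μ hμ.le r₀ hr₀ σ.1 σ'.1 σ.2 σ'.2 hσ1 hσ'1 hσ2 hσ'2 D hDx hDy
    simpa [mvec0, ell0, hc0def] using h
  have h1 : sqnorm (mvec1 A μ r₁ σ - mvec1 A μ r₁ σ') ≤ n * (c1 * D) ^ 2 := by
    have hB : ∀ i j, |(-A.transpose) i j| ≤ 1 := fun i j => by
      simpa [Matrix.transpose_apply] using hAabs j i
    have h := key (-A.transpose) hB μ hμ.le r₁ hr₁ σ.2 σ'.2 σ.1 σ'.1 hσ2 hσ'2 hσ1 hσ'1 D hDy hDx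
    simp only [Matrix.neg_mulVec] at h
    simpa [mvec1, ell1, hc1def] using h
  have hsm : sm ^ 2 = (m : ℝ) := Real.sq_sqrt (Nat.cast_nonneg m)
  have hsn : sn ^ 2 = (n : ℝ) := Real.sq_sqrt (Nat.cast_nonneg n)
  have hsm1 : 1 ≤ sm := by
    rw [hsmdef, show (1 : ℝ) = Real.sqrt 1 by simp]
    exact Real.sqrt_le_sqrt (by exact_mod_cast hm)
  have hsn1 : 1 ≤ sn := by
    rw [hsndef, show (1 : ℝ) = Real.sqrt 1 by simp]
    exact Real.sqrt_le_sqrt (by exact_mod_cast hn)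
  clear_value D sm sn c0 c1
  have hc0 : 0 ≤ c0 := by rw [hc0def]; nlinarith
  have hc1 : 0 ≤ c1 := by rw [hc1def]; nlinarith
  have step1 : Real.sqrt (sqnorm (mvec0 A μ r₀ σ - mvec0 A μ r₀ σ') +
      sqnorm (mvec1 A μ r₁ σ - mvec1 A μ r₁ σ')) ≤ (sm * c0 + sn * c1) * D := by
    have hle : sqnorm (mvec0 A μ r₀ σ - mvec0 A μ r₀ σ') +
        sqnorm (mvec1 A μ r₁ σ - mvec1 A μ r₁ σ') ≤ ((sm * c0 + sn * c1) * D) ^ 2 := by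
      rw [← hsm] at h0; rw [← hsn] at h1
      have hcross : 0 ≤ sm * c0 * (sn * c1) * D ^ 2 :=
        mul_nonneg (mul_nonneg (mul_nonneg (le_trans zero_le_one hsm1) hc0)
          (mul_nonneg (le_trans zero_le_one hsn1) hc1)) (sq_nonneg D)
      nlinarith only [h0, h1, hcross]
    calc Real.sqrt _ ≤ Real.sqrt (((sm * c0 + sn * c1) * D) ^ 2) := Real.sqrt_le_sqrt hle
      _ = (sm * c0 + sn * c1) * D := Real.sqrt_sq (by positivity)
  have step2 : sm * c0 + sn * c1 ≤ 2 * P ^ 2 + 3 * μ * P + P + μ := by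
    rw [hP, ← hsm, ← hsn, hc0def, hc1def]
    have hu1 : 1 ≤ sm * sn := by nlinarith only [hsm1, hsn1]
    have h2u : 2 * (sm * sn) ≤ sm ^ 2 + sn ^ 2 := by nlinarith only [sq_nonneg (sm - sn)]
    have hq : 4 * (sm * sn) ≤ (sm ^ 2 + sn ^ 2) ^ 2 := by
      have hsq : (2 * (sm * sn)) ^ 2 ≤ (sm ^ 2 + sn ^ 2) ^ 2 :=
        pow_le_pow_left₀ (by linarith) h2u 2
      nlinarith only [hsq, hu1]
    have hmsq : 0 ≤ μ * (sm ^ 2 - sm) := mul_nonneg hμ.le (by nlinarith only [hsm1])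
    have hnsq : 0 ≤ μ * (sn ^ 2 - sn) := mul_nonneg hμ.le (by nlinarith only [hsn1])
    nlinarith only [hq, hmsq, hnsq, hμ.le, sq_nonneg (sm ^ 2 + sn ^ 2)]
  exact le_trans step1 (mul_le_mul_of_nonneg_right step2 hD0)
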